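/- Let P be a 2×2×2 real tensor with P(i,j,ℓ) = Σ_a π_a M1(a,i) M2(a,j) M3(a,ℓ), where π ∈ ℝ² and M1, M2, M3 are real 2×2 matrices with row sums equal to 1. Then det(P_{+··}) det(P_{·+·}) det(P_{··+}) = π₁ π₂ Δ(P), where Δ is Cayley's hyperdeterminant and P_{+··}, P_{·+·}, P_{··+} are the three marginalizations of P (summing over the first, second, and third index respectively). -/
import Mathlib


open Matrix BigOperators

/-- Cayley's 2×2×2 hyperdeterminant (real coefficients). -/
noncomputable def hyperdetR (A : Fin 2 → Fin 2 → Fin 2 → ℝ) : ℝ :=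
  ((A 0 0 0)^2 * (A 1 1 1)^2 + (A 0 0 1)^2 * (A 1 1 0)^2 +
   (A 0 1 0)^2 * (A 1 0 1)^2 + (A 0 1 1)^2 * (A 1 0 0)^2)
  - 2 * (A 0 0 0 * A 0 0 1 * A 1 1 0 * A 1 1 1
       + A 0 0 0 * A 0 1 0 * A 1 0 1 * A 1 1 1
       + A 0 0 0 * A 0 1 1 * A 1 0 0 * A 1 1 1
       + A 0 0 1 * A 0 1 0 * A 1 0 1 * A 1 1 0
       + A 0 0 1 * A 0 1 1 * A 1 1 0 * A 1 0 0
       + A 0 1 0 * A 0 1 1 * A 1 0 1 * A 1 0 0)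
  + 4 * (A 0 0 0 * A 0 1 1 * A 1 0 1 * A 1 1 0
       + A 0 0 1 * A 0 1 0 * A 1 0 0 * A 1 1 1)

theorem stmt_9 (π : Fin 2 → ℝ) (M1 M2 M3 : Matrix (Fin 2) (Fin 2) ℝ)
    (hr1 : ∀ a, ∑ i, M1 a i = 1) (hr2 : ∀ a, ∑ j, M2 a j = 1)
    (hr3 : ∀ a, ∑ ℓ, M3 a ℓ = 1)
    (P : Fin 2 → Fin 2 → Fin 2 → ℝ)
    (hP : ∀ i j ℓ, P i j ℓ = ∑ a, π a * M1 a i * M2 a j * M3 a ℓ) :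
    (Matrix.of fun j ℓ => ∑ i, P i j ℓ).det *
      (Matrix.of fun i ℓ => ∑ j, P i j ℓ).det *
      (Matrix.of fun i j => ∑ ℓ, P i j ℓ).det =
    π 0 * π 1 * hyperdetR P := by
  have h10 := hr1 0; have h11 := hr1 1
  have h20 := hr2 0; have h21 := hr2 1
  have h30 := hr3 0; have h31 := hr3 1
  simp only [Fin.sum_univ_two] at h10 h11 h20 h21 h30 h31
  have e1 : M1 0 1 = 1 - M1 0 0 := by linarith
  have e2 : M1 1 1 = 1 - M1 1 0 := by linarith
  have e3 : M2 0 1 = 1 - M2 0 0 := by linarith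
  have e4 : M2 1 1 = 1 - M2 1 0 := by linarith
  have e5 : M3 0 1 = 1 - M3 0 0 := by linarith
  have e6 : M3 1 1 = 1 - M3 1 0 := by linarith
  simp only [hyperdetR, det_fin_two, of_apply, Fin.sum_univ_two, hP, e1, e2, e3, e4, e5, e6]
  ring
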